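/- arXiv:0906.4387 — 3 statements merged into one kernel-verified Lean document; each statement's English description precedes it below -/
import Mathlib

section
/- Weak Plünnecke–Ruzsa inequality for entropy: if X_1,…,X_n, X'_1,…,X'_m are independent copies of a G-valued random variable X, then H(X_1+…+X_n − X'_1−…−X'_m) ≤ H(X) + C·(n+m)·log σ[X] for an absolute constant C, where σ[X] := exp(H(X''_1+X''_2) − H(X)) is the doubling constant of X (X''_1, X''_2 independent copies of X). -/
open Real
open scoped BigOperators Pointwise Classical

/-- A finitely supported probability space. -/
structure FinProb (Ω : Type*) [Fintype Ω] where
  p : Ω → ℝ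
  nonneg : ∀ ω, 0 ≤ p ω
  sum_one : ∑ ω, p ω = 1

/-- Probability that the random variable `X` takes the value `s`. -/
noncomputable def prob {Ω S : Type*} [Fintype Ω] (μ : FinProb Ω) (X : Ω → S) (s : S) : ℝ :=
  ∑ ω, if X ω = s then μ.p ω else 0

/-- Shannon entropy of a discrete random variable. -/
noncomputable def entropy {Ω S : Type*} [Fintype Ω] (μ : FinProb Ω) (X : Ω → S) : ℝ :=
  ∑ s ∈ Finset.univ.image X, Real.negMulLog (prob μ X s)

/-- Conditional Shannon entropy `H(X|Y) = H(X,Y) - H(Y)`. -/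
noncomputable def condEntropy {Ω S T : Type*} [Fintype Ω] (μ : FinProb Ω)
    (X : Ω → S) (Y : Ω → T) : ℝ :=
  entropy μ (fun ω => (X ω, Y ω)) - entropy μ Y

/-- The essential range of a random variable: values attained with positive probability. -/
noncomputable def rangeF {Ω S : Type*} [Fintype Ω] (μ : FinProb Ω) (X : Ω → S) : Finset S :=
  (Finset.univ.image X).filter (fun s => prob μ X s ≠ 0)

/-- Two random variables (on possibly different spaces) have the same distribution. -/
def IdentDist {Ω Ω' S : Type*} [Fintype Ω] [Fintype Ω'] (μ : FinProb Ω) (X : Ω → S)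
    (μ' : FinProb Ω') (Y : Ω' → S) : Prop :=
  ∀ s, prob μ X s = prob μ' Y s

/-- Independence of two random variables. -/
def IndepRV {Ω S T : Type*} [Fintype Ω] (μ : FinProb Ω) (X : Ω → S) (Y : Ω → T) : Prop :=
  ∀ s t, prob μ (fun ω => (X ω, Y ω)) (s, t) = prob μ X s * prob μ Y t

/-- Joint independence of a finite family of random variables. -/
def IndepFam {Ω ι : Type*} [Fintype Ω] [Fintype ι] {S : ι → Type*}
    (μ : FinProb Ω) (X : ∀ i, Ω → S i) : Prop :=
  ∀ f : ∀ i, S i, prob μ (fun ω i => X i ω) f = ∏ i, prob μ (X i) (f i)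

/-- `X` and `Y` are conditionally independent given `W`. -/
def CondIndepGiven {Ω S T U : Type*} [Fintype Ω] (μ : FinProb Ω)
    (X : Ω → S) (Y : Ω → T) (W : Ω → U) : Prop :=
  ∀ s t u, prob μ (fun ω => (X ω, Y ω, W ω)) (s, t, u) * prob μ W u
    = prob μ (fun ω => (X ω, W ω)) (s, u) * prob μ (fun ω => (Y ω, W ω)) (t, u)

/-- `Y` is determined by `X` (almost surely). -/
def Determines {Ω S T : Type*} [Fintype Ω] (μ : FinProb Ω) (X : Ω → S) (Y : Ω → T) : Prop :=
  ∃ f : S → T, ∀ ω, μ.p ω ≠ 0 → Y ω = f (X ω)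

/-- The entropy transport distance between the distributions of `X` and `Y`:
the infimum of `H(Z)` over random variables `Z` (coupled with a copy `X'` of `X`)
such that `X' + Z` is distributed as `Y`. -/
noncomputable def transDist {Ω₁ Ω₂ G : Type*} [Fintype Ω₁] [Fintype Ω₂] [AddCommGroup G]
    (μ : FinProb Ω₁) (X : Ω₁ → G) (ν : FinProb Ω₂) (Y : Ω₂ → G) : ℝ :=
  sInf {h : ℝ | ∃ (n : ℕ) (μ' : FinProb (Fin n)) (X' Z : Fin n → G),
    IdentDist μ' X' μ X ∧ IdentDist μ' (fun ω => X' ω + Z ω) ν Y ∧ entropy μ' Z = h}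

/-- Conditioning a finitely supported probability space on an event `E`
(returning `μ` unchanged if `E` has zero probability). -/
noncomputable def condFinProb {Ω : Type*} [Fintype Ω] (μ : FinProb Ω) (E : Ω → Prop) :
    FinProb Ω :=
  if h : 0 < ∑ ω, if E ω then μ.p ω else 0 then
    { p := fun ω => if E ω then μ.p ω / (∑ ω', if E ω' then μ.p ω' else 0) else 0
      nonneg := fun ω => by
        try dsimp only
        split
        · exact div_nonneg (μ.nonneg ω) h.le
        · exact le_refl 0
      sum_one := by
        have h' : ∀ ω, (if E ω then μ.p ω / (∑ ω', if E ω' then μ.p ω' else 0) else 0)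
            = (if E ω then μ.p ω else 0) / (∑ ω', if E ω' then μ.p ω' else 0) := by
          intro ω; split <;> simp
        rw [Finset.sum_congr rfl (fun ω _ => h' ω), ← Finset.sum_div, div_self h.ne'] }
  else μ

/-!
One may take `C = 1`. Everything rests on one Shannon inequality, `H(X, Y) + H(W) ≤ H(X) + H(Y)`
when `W` is a function of `X` and of `Y`. For independent `A, B, C` it yields the
Kaimanovich–Vershik inequality `H(A + B + C) + H(B) ≤ H(A + B) + H(B + C)` and the Ruzsa
triangle inequality `H(A - C) + H(B) ≤ H(A + B) + H(B + C)`. Kaimanovich–Vershik with `A, B`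
copies of `X` and `C` a sum of `k` copies gives, by induction,
`H(X₁ + ⋯ + X_{k+1}) ≤ H(X) + k log σ[X]`; Ruzsa's inequality with `A, C` the two sums of the
theorem and `B` a further copy of `X` then gives the bound `H(X) + (n + m) log σ[X]`.
The fresh independent copies live on explicit product spaces, to which all laws are transported.
-/

namespace FinProb

variable {Ω S T : Type*} [Fintype Ω] (μ : FinProb Ω)

lemma p_le_prob (X : Ω → S) (ω : Ω) : μ.p ω ≤ prob μ X (X ω) := by
  unfold prob
  simpa using Finset.single_le_sum (f := fun ω' => if X ω' = X ω then μ.p ω' else 0)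
    (fun ω' _ => by split_ifs <;> simp [μ.nonneg]) (Finset.mem_univ ω)

lemma prob_pos_of_p_ne_zero (X : Ω → S) {ω : Ω} (hω : μ.p ω ≠ 0) : 0 < prob μ X (X ω) :=
  (lt_of_le_of_ne (μ.nonneg ω) hω.symm).trans_le (μ.p_le_prob X ω)

lemma prob_nonneg (X : Ω → S) (s : S) : 0 ≤ prob μ X s :=
  Finset.sum_nonneg fun ω _ => by split_ifs <;> first | exact μ.nonneg ω | exact le_rfl

lemma prob_eq_zero_of_forall_ne {X : Ω → S} {s : S} (hs : ∀ ω, X ω ≠ s) : prob μ X s = 0 :=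
  Finset.sum_eq_zero fun ω _ => if_neg (hs ω)

lemma sum_p_mul_comp (X : Ω → S) (f : S → ℝ) {A : Finset S} (hA : ∀ ω, X ω ∈ A) :
    ∑ ω, μ.p ω * f (X ω) = ∑ s ∈ A, prob μ X s * f s := by
  rw [← Finset.sum_fiberwise_of_maps_to (g := X) (t := A) fun ω _ => hA ω]
  refine Finset.sum_congr rfl fun s _ => ?_
  rw [prob, ← Finset.sum_filter, Finset.sum_mul]
  exact Finset.sum_congr rfl fun ω hω => by rw [(Finset.mem_filter.1 hω).2]

lemma sum_prob_eq_one (X : Ω → S) {A : Finset S} (hA : ∀ ω, X ω ∈ A) :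
    ∑ s ∈ A, prob μ X s = 1 := by
  simpa using (μ.sum_p_mul_comp X (fun _ => 1) hA).symm.trans (by simpa using μ.sum_one)

lemma prob_comp_eq_sum (X : Ω → S) (φ : S → T) {A : Finset S} (hA : ∀ ω, X ω ∈ A) (t : T) :
    prob μ (fun ω => φ (X ω)) t = ∑ s ∈ A with φ s = t, prob μ X s := by
  unfold prob
  rw [Finset.sum_comm]
  refine Finset.sum_congr rfl fun ω _ => ?_
  rw [Finset.sum_ite_eq]
  simp [hA ω]

lemma prob_comp_of_injective (X : Ω → S) {φ : S → T} (hφ : φ.Injective) (s : S) :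
    prob μ (fun ω => φ (X ω)) (φ s) = prob μ X s := by
  simp only [prob, hφ.eq_iff]

lemma entropy_eq_sum_of_forall_mem (X : Ω → S) {A : Finset S} (hA : ∀ ω, X ω ∈ A) :
    entropy μ X = ∑ s ∈ A, negMulLog (prob μ X s) := by
  refine Finset.sum_subset (fun s hs => ?_) fun s _ hs => ?_
  · obtain ⟨ω, -, rfl⟩ := Finset.mem_image.1 hs
    exact hA ω
  · rw [μ.prob_eq_zero_of_forall_ne fun ω h => hs (Finset.mem_image.2 ⟨ω, Finset.mem_univ ω, h⟩),
      negMulLog_zero]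

lemma entropy_eq_sum_p_mul_neg_log (X : Ω → S) :
    entropy μ X = ∑ ω, μ.p ω * -log (prob μ X (X ω)) := by
  rw [μ.sum_p_mul_comp X (fun s => -log (prob μ X s)) fun ω => Finset.mem_image_of_mem X
    (Finset.mem_univ ω), entropy]
  exact Finset.sum_congr rfl fun s _ => by rw [negMulLog, neg_mul, mul_neg]

lemma entropy_comp_of_injective (X : Ω → S) {φ : S → T} (hφ : φ.Injective) :
    entropy μ (fun ω => φ (X ω)) = entropy μ X := by
  simp only [entropy_eq_sum_p_mul_neg_log, μ.prob_comp_of_injective X hφ]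

lemma entropy_const (c : S) : entropy μ (fun _ => c) = 0 := by
  rw [entropy_eq_sum_p_mul_neg_log]
  have : prob μ (fun _ => c) c = 1 := by simpa [prob] using μ.sum_one
  simp [this]

end FinProb

namespace IdentDist

variable {Ω Ω' Ω'' S T : Type*} [Fintype Ω] [Fintype Ω'] [Fintype Ω'']
  {μ : FinProb Ω} {μ' : FinProb Ω'} {μ'' : FinProb Ω''} {X : Ω → S} {Y : Ω' → S}

lemma trans {Z : Ω'' → S} (h : IdentDist μ X μ' Y) (h' : IdentDist μ' Y μ'' Z) :
    IdentDist μ X μ'' Z :=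
  fun s => (h s).trans (h' s)

lemma comp (h : IdentDist μ X μ' Y) (φ : S → T) :
    IdentDist μ (fun ω => φ (X ω)) μ' (fun ω => φ (Y ω)) := by
  intro t
  rw [μ.prob_comp_eq_sum X φ (A := Finset.univ.image X ∪ Finset.univ.image Y) (by simp),
    μ'.prob_comp_eq_sum Y φ (A := Finset.univ.image X ∪ Finset.univ.image Y) (by simp)]
  exact Finset.sum_congr rfl fun s _ => h s

lemma entropy_eq (h : IdentDist μ X μ' Y) : entropy μ X = entropy μ' Y := by
  rw [μ.entropy_eq_sum_of_forall_mem X (A := Finset.univ.image X ∪ Finset.univ.image Y)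
    (by simp), μ'.entropy_eq_sum_of_forall_mem Y (A := Finset.univ.image X ∪ Finset.univ.image Y)
    (by simp)]
  exact Finset.sum_congr rfl fun s _ => by rw [h s]

end IdentDist

lemma identDist_of_equiv {Ω Ω' S : Type*} [Fintype Ω] [Fintype Ω'] {μ : FinProb Ω}
    {μ' : FinProb Ω'} (e : Ω' ≃ Ω) (he : ∀ ω', μ'.p ω' = μ.p (e ω')) (X : Ω → S) :
    IdentDist μ' (fun ω' => X (e ω')) μ X := by
  intro s
  unfold prob
  rw [← e.sum_comp]
  simp [he]

namespace FinProb

variable {Ω S T U : Type*} [Fintype Ω] (μ : FinProb Ω)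

lemma sum_p_mul_ratio_le_one (X : Ω → S) (Y : Ω → T) (g : S → U) (h : T → U)
    (hgh : ∀ ω, g (X ω) = h (Y ω)) :
    ∑ ω, μ.p ω * (prob μ X (X ω) * prob μ Y (Y ω) /
      (prob μ (fun ω => (X ω, Y ω)) (X ω, Y ω) * prob μ (fun ω => g (X ω)) (g (X ω)))) ≤ 1 := by
  set J : Ω → S × T := fun ω => (X ω, Y ω)
  set pW : U → ℝ := prob μ (fun ω => g (X ω))
  set F : S × T → ℝ := fun z => prob μ X z.1 * prob μ Y z.2 / pW (g z.1)
  have hF : ∀ z, 0 ≤ F z := fun z =>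
    div_nonneg (mul_nonneg (μ.prob_nonneg X _) (μ.prob_nonneg Y _)) (μ.prob_nonneg _ _)
  have hpW : ∀ x, pW (g x) = ∑ y ∈ Finset.univ.image Y with h y = g x, prob μ Y y := by
    intro x
    simp only [pW, hgh]
    exact μ.prob_comp_eq_sum Y h (by simp) (g x)
  calc ∑ ω, μ.p ω * (prob μ X (X ω) * prob μ Y (Y ω) / (prob μ J (J ω) * pW (g (X ω))))
      = ∑ z ∈ Finset.univ.image J, prob μ J z * (F z / prob μ J z) := by
        rw [← μ.sum_p_mul_comp J (fun z => F z / prob μ J z) (by simp)]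
        exact Finset.sum_congr rfl fun ω _ => by simp only [F, J]; ring
    _ ≤ ∑ z ∈ Finset.univ.image J, F z := by
        refine Finset.sum_le_sum fun z _ => ?_
        calc prob μ J z * (F z / prob μ J z) = F z * (prob μ J z / prob μ J z) := by ring
          _ ≤ F z := mul_le_of_le_one_right (hF z) (div_self_le_one _)
    _ ≤ ∑ z ∈ Finset.univ.image X ×ˢ Finset.univ.image Y with h z.2 = g z.1, F z := by
        refine Finset.sum_le_sum_of_subset_of_nonneg (fun z hz => ?_) fun z _ _ => hF z
        obtain ⟨ω, -, rfl⟩ := Finset.mem_image.1 hz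
        simp [J, hgh ω]
    _ = ∑ x ∈ Finset.univ.image X,
          prob μ X x / pW (g x) * ∑ y ∈ Finset.univ.image Y with h y = g x, prob μ Y y := by
        rw [Finset.sum_finset_product _ _ (fun x => Finset.univ.image Y |>.filter (h · = g x))
          fun z => by simp only [Finset.mem_filter, Finset.mem_product]; tauto]
        refine Finset.sum_congr rfl fun x _ => ?_
        rw [Finset.mul_sum]
        exact Finset.sum_congr rfl fun y _ => by simp only [F]; ring
    _ ≤ ∑ x ∈ Finset.univ.image X, prob μ X x := by
        refine Finset.sum_le_sum fun x _ => ?_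
        rw [← hpW x, div_mul_eq_mul_div, mul_div_assoc]
        exact mul_le_of_le_one_right (μ.prob_nonneg X x) (div_self_le_one _)
    _ = 1 := μ.sum_prob_eq_one X (by simp)

/-- Submodularity of entropy for `(X, W)` and `(Y, W)`, where `W = g X = h Y`. Pointwise
`log r ≤ r - 1` for `r = p_X p_Y / (p_{(X,Y)} p_W)`, and the mean of `r` is at most `1`. -/
theorem entropy_pair_add_entropy_le_of_comp_eq (X : Ω → S) (Y : Ω → T) (g : S → U)
    (h : T → U) (hgh : ∀ ω, g (X ω) = h (Y ω)) :
    entropy μ (fun ω => (X ω, Y ω)) + entropy μ (fun ω => g (X ω)) ≤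
      entropy μ X + entropy μ Y := by
  simp only [entropy_eq_sum_p_mul_neg_log, ← Finset.sum_add_distrib]
  set r : Ω → ℝ := fun ω => prob μ X (X ω) * prob μ Y (Y ω) /
      (prob μ (fun ω => (X ω, Y ω)) (X ω, Y ω) * prob μ (fun ω => g (X ω)) (g (X ω)))
  have hterm : ∀ ω, μ.p ω * -log (prob μ (fun ω => (X ω, Y ω)) (X ω, Y ω)) +
      μ.p ω * -log (prob μ (fun ω => g (X ω)) (g (X ω))) ≤
      μ.p ω * -log (prob μ X (X ω)) + μ.p ω * -log (prob μ Y (Y ω)) + (μ.p ω * r ω - μ.p ω) := by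
    intro ω
    rcases eq_or_ne (μ.p ω) 0 with hω | hω
    · simp [hω]
    have hJ := μ.prob_pos_of_p_ne_zero (fun ω => (X ω, Y ω)) hω
    have hW := μ.prob_pos_of_p_ne_zero (fun ω => g (X ω)) hω
    have hX := μ.prob_pos_of_p_ne_zero X hω
    have hY := μ.prob_pos_of_p_ne_zero Y hω
    have hlog : log (r ω) ≤ r ω - 1 := log_le_sub_one_of_pos (by positivity)
    rw [log_div (by positivity) (by positivity), log_mul hX.ne' hY.ne',
      log_mul hJ.ne' hW.ne'] at hlog
    nlinarith [μ.nonneg ω]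
  calc _ ≤ ∑ ω, (μ.p ω * -log (prob μ X (X ω)) + μ.p ω * -log (prob μ Y (Y ω)) +
        (μ.p ω * r ω - μ.p ω)) := Finset.sum_le_sum fun ω _ => hterm ω
    _ ≤ _ := by
      rw [Finset.sum_add_distrib, Finset.sum_sub_distrib, μ.sum_one]
      linarith [μ.sum_p_mul_ratio_le_one X Y g h hgh]

lemma entropy_pair_le (X : Ω → S) (Y : Ω → T) :
    entropy μ (fun ω => (X ω, Y ω)) ≤ entropy μ X + entropy μ Y := by
  simpa [entropy_const] using
    μ.entropy_pair_add_entropy_le_of_comp_eq X Y (fun _ => ()) (fun _ => ()) fun _ => rfl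

end FinProb

namespace IndepRV

variable {Ω Ω' S T U S' T' : Type*} [Fintype Ω] [Fintype Ω'] {μ : FinProb Ω}
  {X : Ω → S} {Y : Ω → T}

lemma comp (h : IndepRV μ X Y) (f : S → S') (g : T → T') :
    IndepRV μ (fun ω => f (X ω)) (fun ω => g (Y ω)) := by
  intro s t
  have hX : ∀ ω, X ω ∈ Finset.univ.image X := fun ω => Finset.mem_image_of_mem X (by simp)
  have hY : ∀ ω, Y ω ∈ Finset.univ.image Y := fun ω => Finset.mem_image_of_mem Y (by simp)
  change prob μ (fun ω => Prod.map f g (X ω, Y ω)) (s, t) = _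
  rw [μ.prob_comp_eq_sum (fun ω => (X ω, Y ω)) (Prod.map f g)
      (A := Finset.univ.image X ×ˢ Finset.univ.image Y) fun ω => Finset.mem_product.2 ⟨hX ω, hY ω⟩,
    μ.prob_comp_eq_sum X f hX, μ.prob_comp_eq_sum Y g hY, Finset.sum_mul_sum,
    ← Finset.sum_product']
  simp only [Prod.map, Prod.mk.injEq]
  rw [← Finset.filter_product]
  exact Finset.sum_congr rfl fun z _ => h z.1 z.2

lemma symm (h : IndepRV μ X Y) : IndepRV μ Y X := by
  intro t s
  change prob μ (fun ω => Prod.swap (X ω, Y ω)) (Prod.swap (s, t)) = _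
  rw [μ.prob_comp_of_injective (fun ω => (X ω, Y ω)) Prod.swap_injective (s, t), h, mul_comm]

lemma assoc {Z : Ω → U} (h₁ : IndepRV μ X Y) (h₂ : IndepRV μ (fun ω => (X ω, Y ω)) Z) :
    IndepRV μ X (fun ω => (Y ω, Z ω)) := by
  rintro s ⟨t, u⟩
  have hYZ : IndepRV μ Y Z := h₂.comp Prod.snd id
  change prob μ (fun ω => Equiv.prodAssoc S T U ((X ω, Y ω), Z ω))
    (Equiv.prodAssoc S T U ((s, t), u)) = _
  rw [hYZ, μ.prob_comp_of_injective _ (Equiv.prodAssoc S T U).injective, h₂, h₁, mul_assoc]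

lemma of_identDist {ν : FinProb Ω'} {X' : Ω' → S} {Y' : Ω' → T} (h : IndepRV ν X' Y')
    (hXY : IdentDist μ (fun ω => (X ω, Y ω)) ν (fun ω => (X' ω, Y' ω))) : IndepRV μ X Y := by
  intro s t
  rw [hXY, h, ← hXY.comp Prod.fst s, ← hXY.comp Prod.snd t]

lemma entropy_pair_eq (h : IndepRV μ X Y) :
    entropy μ (fun ω => (X ω, Y ω)) = entropy μ X + entropy μ Y := by
  simp only [FinProb.entropy_eq_sum_p_mul_neg_log, ← Finset.sum_add_distrib]
  refine Finset.sum_congr rfl fun ω _ => ?_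
  rcases eq_or_ne (μ.p ω) 0 with hω | hω
  · simp [hω]
  rw [h, log_mul (μ.prob_pos_of_p_ne_zero X hω).ne' (μ.prob_pos_of_p_ne_zero Y hω).ne']
  ring

lemma entropy_triple_eq {Z : Ω → U} (h₁ : IndepRV μ X Y)
    (h₂ : IndepRV μ (fun ω => (X ω, Y ω)) Z) :
    entropy μ (fun ω => ((X ω, Y ω), Z ω)) = entropy μ X + entropy μ Y + entropy μ Z := by
  rw [h₂.entropy_pair_eq, h₁.entropy_pair_eq]

end IndepRV

section Additive

variable {Ω G : Type*} [Fintype Ω] [AddCommGroup G] (μ : FinProb Ω) {A B C : Ω → G}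

theorem entropy_kaimanovich_vershik (h₁ : IndepRV μ A B)
    (h₂ : IndepRV μ (fun ω => (A ω, B ω)) C) :
    entropy μ (fun ω => A ω + B ω + C ω) + entropy μ B ≤
      entropy μ (fun ω => A ω + B ω) + entropy μ (fun ω => B ω + C ω) := by
  have hsub := μ.entropy_pair_add_entropy_le_of_comp_eq (fun ω => (A ω + B ω, C ω))
    (fun ω => (A ω, B ω + C ω)) (fun p => p.1 + p.2) (fun p => p.1 + p.2)
    fun ω => add_assoc _ _ _
  have hinj : Function.Injective
      fun x : (G × G) × G => ((x.1.1 + x.1.2, x.2), (x.1.1, x.1.2 + x.2)) :=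
    Function.LeftInverse.injective (g := fun y => ((y.2.1, y.1.1 - y.2.1), y.1.2)) fun x => by simp
  have hjoint : entropy μ (fun ω => ((A ω + B ω, C ω), (A ω, B ω + C ω))) =
      entropy μ A + entropy μ B + entropy μ C :=
    (μ.entropy_comp_of_injective (fun ω => ((A ω, B ω), C ω)) hinj).trans
      (h₁.entropy_triple_eq h₂)
  have hleft : entropy μ (fun ω => (A ω + B ω, C ω)) =
      entropy μ (fun ω => A ω + B ω) + entropy μ C :=
    (h₂.comp (fun p => p.1 + p.2) id).entropy_pair_eq
  have hright : entropy μ (fun ω => (A ω, B ω + C ω)) =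
      entropy μ A + entropy μ (fun ω => B ω + C ω) :=
    ((h₁.assoc h₂).comp id fun p => p.1 + p.2).entropy_pair_eq
  simp only at hsub
  linarith

theorem entropy_ruzsa_triangle (h₁ : IndepRV μ A B)
    (h₂ : IndepRV μ (fun ω => (A ω, B ω)) C) :
    entropy μ (fun ω => A ω - C ω) + entropy μ B ≤
      entropy μ (fun ω => A ω + B ω) + entropy μ (fun ω => B ω + C ω) := by
  have hsub := μ.entropy_pair_add_entropy_le_of_comp_eq (fun ω => (A ω, C ω))
    (fun ω => (A ω + B ω, B ω + C ω)) (fun p => p.1 - p.2) (fun p => p.1 - p.2)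
    fun ω => by simp only; abel
  have hinj : Function.Injective
      fun x : (G × G) × G => ((x.1.1, x.2), (x.1.1 + x.1.2, x.1.2 + x.2)) :=
    Function.LeftInverse.injective (g := fun y => ((y.1.1, y.2.1 - y.1.1), y.1.2)) fun x => by simp
  have hjoint : entropy μ (fun ω => ((A ω, C ω), (A ω + B ω, B ω + C ω))) =
      entropy μ A + entropy μ B + entropy μ C :=
    (μ.entropy_comp_of_injective (fun ω => ((A ω, B ω), C ω)) hinj).trans
      (h₁.entropy_triple_eq h₂)
  have hAC : entropy μ (fun ω => (A ω, C ω)) = entropy μ A + entropy μ C :=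
    ((h₁.assoc h₂).comp id Prod.snd).entropy_pair_eq
  have hpair := μ.entropy_pair_le (fun ω => A ω + B ω) (fun ω => B ω + C ω)
  simp only at hsub
  linarith

end Additive

namespace FinProb

variable {Ω₁ Ω₂ S T : Type*} [Fintype Ω₁] [Fintype Ω₂] (μ : FinProb Ω₁) (ν : FinProb Ω₂)

noncomputable def prod : FinProb (Ω₁ × Ω₂) where
  p ω := μ.p ω.1 * ν.p ω.2
  nonneg ω := mul_nonneg (μ.nonneg _) (ν.nonneg _)
  sum_one := by simp [Fintype.sum_prod_type, ← Finset.mul_sum, ν.sum_one, μ.sum_one]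

lemma prob_prod_mk (X : Ω₁ → S) (Y : Ω₂ → T) (s : S) (t : T) :
    prob (μ.prod ν) (fun ω => (X ω.1, Y ω.2)) (s, t) = prob μ X s * prob ν Y t := by
  simp only [prob, prod, Fintype.sum_prod_type, Finset.sum_mul_sum, Prod.mk.injEq]
  refine Finset.sum_congr rfl fun a _ => Finset.sum_congr rfl fun b _ => ?_
  by_cases ha : X a = s <;> by_cases hb : Y b = t <;> simp [ha, hb]

lemma identDist_prod_fst (X : Ω₁ → S) : IdentDist (μ.prod ν) (fun ω => X ω.1) μ X := by
  intro s
  simp [prob, prod, Fintype.sum_prod_type, ← Finset.mul_sum, ν.sum_one]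

lemma identDist_prod_snd (Y : Ω₂ → T) : IdentDist (μ.prod ν) (fun ω => Y ω.2) ν Y := by
  intro t
  simp only [prob, prod, Fintype.sum_prod_type_right]
  refine Finset.sum_congr rfl fun b _ => ?_
  split_ifs <;> simp [← Finset.sum_mul, μ.sum_one]

lemma indepRV_prod (X : Ω₁ → S) (Y : Ω₂ → T) :
    IndepRV (μ.prod ν) (fun ω => X ω.1) (fun ω => Y ω.2) := by
  intro s t
  rw [prob_prod_mk, identDist_prod_fst μ ν X s, identDist_prod_snd μ ν Y t]

end FinProb

lemma IndepRV.identDist_prod {Ω Ω₁ Ω₂ S T : Type*} [Fintype Ω] [Fintype Ω₁] [Fintype Ω₂]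
    {μ : FinProb Ω} {μ₁ : FinProb Ω₁} {μ₂ : FinProb Ω₂} {X : Ω → S} {Y : Ω → T}
    {X₁ : Ω₁ → S} {Y₂ : Ω₂ → T} (h : IndepRV μ X Y) (hX : IdentDist μ X μ₁ X₁)
    (hY : IdentDist μ Y μ₂ Y₂) :
    IdentDist μ (fun ω => (X ω, Y ω)) (μ₁.prod μ₂) (fun ω => (X₁ ω.1, Y₂ ω.2)) := by
  rintro ⟨s, t⟩
  rw [h, hX, hY, FinProb.prob_prod_mk]

lemma IndepRV.prod_fst {Ω Ω' S T : Type*} [Fintype Ω] [Fintype Ω'] {μ : FinProb Ω}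
    {X : Ω → S} {Y : Ω → T} (h : IndepRV μ X Y) (ν : FinProb Ω') :
    IndepRV (μ.prod ν) (fun ω => X ω.1) (fun ω => Y ω.1) :=
  h.of_identDist (μ.identDist_prod_fst ν fun ω => (X ω, Y ω))

namespace FinProb

variable {Ω₀ : Type*} [Fintype Ω₀] (μ₀ : FinProb Ω₀)

noncomputable def pi (ι : Type*) [Fintype ι] [DecidableEq ι] : FinProb (ι → Ω₀) where
  p ω := ∏ i, μ₀.p (ω i)
  nonneg ω := Finset.prod_nonneg fun i _ => μ₀.nonneg _
  sum_one := by
    rw [← Fintype.prod_sum (f := fun _ a => μ₀.p a)]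
    simp [μ₀.sum_one]

lemma prob_pi {ι S : Type*} [Fintype ι] [DecidableEq ι] (X₀ : Ω₀ → S) (f : ι → S) :
    prob (μ₀.pi ι) (fun ω i => X₀ (ω i)) f = ∏ i, prob μ₀ X₀ (f i) := by
  unfold prob
  rw [Fintype.prod_sum]
  refine Finset.sum_congr rfl fun ω _ => ?_
  by_cases hω : ∀ i, X₀ (ω i) = f i
  · simp [hω, pi]
  · obtain ⟨i, hi⟩ := not_forall.1 hω
    rw [if_neg fun h => hi (congrFun h i), Finset.prod_eq_zero (Finset.mem_univ i) (if_neg hi)]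

end FinProb

lemma IndepFam.identDist_pi {Ω Ω₀ ι S : Type*} [Fintype Ω] [Fintype Ω₀] [Fintype ι]
    [DecidableEq ι] {μ : FinProb Ω} {X : ι → Ω → S} {μ₀ : FinProb Ω₀} {X₀ : Ω₀ → S} (h : IndepFam μ X)
    (hX : ∀ i, IdentDist μ (X i) μ₀ X₀) :
    IdentDist μ (fun ω i => X i ω) (μ₀.pi ι) (fun ω i => X₀ (ω i)) := by
  intro f
  rw [h, μ₀.prob_pi]
  exact Finset.prod_congr rfl fun i _ => hX i (f i)

lemma IndepFam.identDist_prod_pi {Ω Ω₀ ι κ S : Type*} [Fintype Ω] [Fintype Ω₀] [Fintype ι]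
    [Fintype κ] [DecidableEq ι] [DecidableEq κ] {μ : FinProb Ω} {X : ι → Ω → S}
    {Y : κ → Ω → S} {μ₀ : FinProb Ω₀} {X₀ : Ω₀ → S} (h : IndepFam μ (Sum.elim X Y)) (hX : ∀ i, IdentDist μ (X i) μ₀ X₀)
    (hY : ∀ j, IdentDist μ (Y j) μ₀ X₀) :
    IdentDist μ (fun ω => (fun i => X i ω, fun j => Y j ω)) ((μ₀.pi ι).prod (μ₀.pi κ))
      (fun ω => (fun i => X₀ (ω.1 i), fun j => X₀ (ω.2 j))) := by
  have hpi : IdentDist μ (fun ω k => Sum.elim X Y k ω) (μ₀.pi (ι ⊕ κ)) (fun ω k => X₀ (ω k)) :=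
    h.identDist_pi (Sum.rec hX hY)
  have e := identDist_of_equiv (μ := (μ₀.pi ι).prod (μ₀.pi κ)) (μ' := μ₀.pi (ι ⊕ κ))
    (Equiv.sumArrowEquivProdArrow ι κ Ω₀) (fun ω => Fintype.prod_sum_type _)
    fun ω => (fun i => X₀ (ω.1 i), fun j => X₀ (ω.2 j))
  exact (hpi.comp (Equiv.sumArrowEquivProdArrow ι κ S)).trans e

section SumsOfCopies

variable {Ω₀ G : Type*} [Fintype Ω₀] [AddCommGroup G] (μ₀ : FinProb Ω₀) (X₀ : Ω₀ → G)

noncomputable def entropySum (k : ℕ) : ℝ :=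
  entropy (μ₀.pi (Fin k)) fun ω => ∑ i, X₀ (ω i)

/-- `log σ[X₀]`, for the doubling constant `σ[X₀]`. -/
noncomputable def logDoubling : ℝ :=
  entropy (μ₀.prod μ₀) (fun ω => X₀ ω.1 + X₀ ω.2) - entropy μ₀ X₀

lemma identDist_prod_pi_add_sum (k : ℕ) :
    IdentDist (μ₀.prod (μ₀.pi (Fin k))) (fun ω => X₀ ω.1 + ∑ i, X₀ (ω.2 i))
      (μ₀.pi (Fin (k + 1))) (fun ω => ∑ i, X₀ (ω i)) := by
  have e := identDist_of_equiv (μ := μ₀.pi (Fin (k + 1))) (μ' := μ₀.prod (μ₀.pi (Fin k)))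
    (Fin.consEquiv fun _ => Ω₀) (fun ω => by simp [FinProb.prod, FinProb.pi, Fin.prod_univ_succ])
    fun ω => ∑ i, X₀ (ω i)
  simpa [Fin.consEquiv, Fin.sum_univ_succ] using e

lemma entropySum_one : entropySum μ₀ X₀ 1 = entropy μ₀ X₀ := by
  have e := identDist_of_equiv (μ := μ₀) (μ' := μ₀.pi (Fin 1)) (Equiv.funUnique (Fin 1) Ω₀)
    (fun ω => by simp [FinProb.pi]) X₀
  simpa [entropySum] using e.entropy_eq

variable {μ₀ X₀}

lemma IndepRV.identDist_add_sum_pi {Ω : Type*} [Fintype Ω] {μ : FinProb Ω} {B A : Ω → G}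
    {k : ℕ} (h : IndepRV μ B A) (hB : IdentDist μ B μ₀ X₀)
    (hA : IdentDist μ A (μ₀.pi (Fin k)) fun ω => ∑ i, X₀ (ω i)) :
    IdentDist μ (fun ω => B ω + A ω) (μ₀.pi (Fin (k + 1))) fun ω => ∑ i, X₀ (ω i) :=
  ((h.identDist_prod hB hA).comp fun p => p.1 + p.2).trans (identDist_prod_pi_add_sum μ₀ X₀ k)

variable (μ₀ X₀)

lemma entropySum_add_two_le (k : ℕ) :
    entropySum μ₀ X₀ (k + 2) ≤ entropySum μ₀ X₀ (k + 1) + logDoubling μ₀ X₀ := by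
  set T := (μ₀.prod μ₀).prod (μ₀.pi (Fin k))
  have h₁ : IndepRV T (fun ω => X₀ ω.1.1) (fun ω => X₀ ω.1.2) :=
    (μ₀.indepRV_prod μ₀ X₀ X₀).prod_fst _
  have h₂ : IndepRV T (fun ω => (X₀ ω.1.1, X₀ ω.1.2)) (fun ω => ∑ i, X₀ (ω.2 i)) :=
    (μ₀.prod μ₀).indepRV_prod _ (fun u => (X₀ u.1, X₀ u.2)) fun v : Fin k → Ω₀ => ∑ i, X₀ (v i)
  have hA : IdentDist T (fun ω => X₀ ω.1.1) μ₀ X₀ :=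
    ((μ₀.prod μ₀).identDist_prod_fst _ fun u => X₀ u.1).trans (μ₀.identDist_prod_fst μ₀ X₀)
  have hB : IdentDist T (fun ω => X₀ ω.1.2) μ₀ X₀ :=
    ((μ₀.prod μ₀).identDist_prod_fst _ fun u => X₀ u.2).trans (μ₀.identDist_prod_snd μ₀ X₀)
  have hBC := (h₂.comp Prod.snd id).identDist_add_sum_pi hB
    ((μ₀.prod μ₀).identDist_prod_snd (μ₀.pi (Fin k)) fun v => ∑ i, X₀ (v i))
  have hABC := ((h₁.assoc h₂).comp id fun p => p.1 + p.2).identDist_add_sum_pi hA hBC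
  have hAB := ((h₁.identDist_prod hA hB).comp fun p => p.1 + p.2).entropy_eq
  have hkv := entropy_kaimanovich_vershik T h₁ h₂
  dsimp only [id] at hBC hABC hAB
  simp only [add_assoc] at hkv
  rw [hABC.entropy_eq, hBC.entropy_eq, hAB, hB.entropy_eq] at hkv
  unfold entropySum logDoubling
  linarith

lemma entropySum_succ_le (k : ℕ) :
    entropySum μ₀ X₀ (k + 1) ≤ entropy μ₀ X₀ + k * logDoubling μ₀ X₀ := by
  induction k with
  | zero => simp [entropySum_one]
  | succ k ih =>
    push_cast
    linarith [entropySum_add_two_le μ₀ X₀ k]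

lemma entropy_sum_sub_sum_le (n m : ℕ) :
    entropy ((μ₀.pi (Fin n)).prod (μ₀.pi (Fin m))) (fun ω => ∑ i, X₀ (ω.1 i) - ∑ j, X₀ (ω.2 j))
      ≤ entropy μ₀ X₀ + (n + m) * logDoubling μ₀ X₀ := by
  set T := ((μ₀.pi (Fin n)).prod μ₀).prod (μ₀.pi (Fin m))
  have h₁ : IndepRV T (fun ω => ∑ i, X₀ (ω.1.1 i)) (fun ω => X₀ ω.1.2) :=
    ((μ₀.pi (Fin n)).indepRV_prod μ₀ (fun u => ∑ i, X₀ (u i)) X₀).prod_fst _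
  have h₂ : IndepRV T (fun ω => (∑ i, X₀ (ω.1.1 i), X₀ ω.1.2)) (fun ω => ∑ j, X₀ (ω.2 j)) :=
    ((μ₀.pi (Fin n)).prod μ₀).indepRV_prod _ (fun u => (∑ i, X₀ (u.1 i), X₀ u.2))
      fun v : Fin m → Ω₀ => ∑ j, X₀ (v j)
  have hA : IdentDist T (fun ω => ∑ i, X₀ (ω.1.1 i)) (μ₀.pi (Fin n)) fun u => ∑ i, X₀ (u i) :=
    (((μ₀.pi (Fin n)).prod μ₀).identDist_prod_fst _ fun u => ∑ i, X₀ (u.1 i)).trans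
      ((μ₀.pi (Fin n)).identDist_prod_fst μ₀ fun u => ∑ i, X₀ (u i))
  have hB : IdentDist T (fun ω => X₀ ω.1.2) μ₀ X₀ :=
    (((μ₀.pi (Fin n)).prod μ₀).identDist_prod_fst _ fun u => X₀ u.2).trans
      ((μ₀.pi (Fin n)).identDist_prod_snd μ₀ X₀)
  have hC : IdentDist T (fun ω => ∑ j, X₀ (ω.2 j)) (μ₀.pi (Fin m)) fun v => ∑ j, X₀ (v j) :=
    ((μ₀.pi (Fin n)).prod μ₀).identDist_prod_snd (μ₀.pi (Fin m)) fun v => ∑ j, X₀ (v j)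
  have hAC := (((h₁.assoc h₂).comp id Prod.snd).identDist_prod hA hC).comp fun p => p.1 - p.2
  have hAB : entropy T (fun ω => ∑ i, X₀ (ω.1.1 i) + X₀ ω.1.2) = entropySum μ₀ X₀ (n + 1) := by
    rw [entropySum, ← (h₁.symm.identDist_add_sum_pi hB hA).entropy_eq]
    simp only [add_comm]
  have hBC := (h₂.comp Prod.snd id).identDist_add_sum_pi hB hC
  have hruzsa := entropy_ruzsa_triangle T h₁ h₂
  dsimp only [id] at hAC hBC
  rw [hAC.entropy_eq, hB.entropy_eq, hAB, hBC.entropy_eq, ← entropySum] at hruzsa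
  linarith [entropySum_succ_le μ₀ X₀ n, entropySum_succ_le μ₀ X₀ m]

end SumsOfCopies

/-- weak Plünnecke–Ruzsa inequality for entropy: there is an absolute
constant `C` such that if `X_1, …, X_n, X'_1, …, X'_m` are jointly independent copies of a
random variable `X₀` (whose doubling constant `σ[X₀]` is computed from two further
independent copies `W₁, W₂`), then
`H(X_1 + … + X_n − X'_1 − … − X'_m) ≤ H(X₀) + C·(n+m)·log σ[X₀]`. -/
theorem weak_pluennecke_ruzsa_entropy :
    ∃ C : ℝ, ∀ (G : Type) [AddCommGroup G] (Ω₀ Ω Ω' : Type)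
      [Fintype Ω₀] [Fintype Ω] [Fintype Ω']
      (μ₀ : FinProb Ω₀) (X₀ : Ω₀ → G) (n m : ℕ) (μ : FinProb Ω)
      (Xc : Fin n → Ω → G) (X'c : Fin m → Ω → G)
      (μ' : FinProb Ω') (W₁ W₂ : Ω' → G),
      IndepFam μ (Sum.elim Xc X'c) →
      (∀ i, IdentDist μ (Xc i) μ₀ X₀) →
      (∀ j, IdentDist μ (X'c j) μ₀ X₀) →
      IndepRV μ' W₁ W₂ →
      IdentDist μ' W₁ μ₀ X₀ →
      IdentDist μ' W₂ μ₀ X₀ →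
      entropy μ (fun ω => (∑ i, Xc i ω) - ∑ j, X'c j ω) ≤
        entropy μ₀ X₀ +
          C * ((n : ℝ) + (m : ℝ)) *
            (entropy μ' (fun ω => W₁ ω + W₂ ω) - entropy μ₀ X₀) := by
  refine ⟨1, fun G _ Ω₀ Ω Ω' _ _ _ μ₀ X₀ n m μ Xc X'c μ' W₁ W₂ hfam hXc hX'c hW hW₁ hW₂ => ?_⟩
  have hdiff := ((hfam.identDist_prod_pi hXc hX'c).comp fun p => ∑ i, p.1 i - ∑ j, p.2 j).entropy_eq
  have hdbl := ((hW.identDist_prod hW₁ hW₂).comp fun p => p.1 + p.2).entropy_eq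
  rw [hdiff, hdbl, one_mul]
  exact entropy_sum_sub_sum_le μ₀ X₀ n m
end

section
/- Weak entropy Balog–Szemerédi–Gowers: let X, Y be G-valued random variables with H(X,Y) ≥ H(X)+H(Y)−log K and H(X+Y) ≤ H(X)/2 + H(Y)/2 + log K for some K ≥ 1. If X_1, X_2 are conditionally independent copies of X given Y, then H(X_1 − X_2 | Y) ≤ H(X) + 4 log K. -/
open Real
open scoped BigOperators Pointwise Classical

/-! Submodularity of entropy applied to `(X₂ + Y, X₂, X₁ - X₂)`, an invertible relabelling of
`(X₁, X₂, Y)`, gives `H(X₁ - X₂) ≤ H(X₁ + Y, X₂ + Y) + H(X₁, X₂) - H(X₁, X₂, Y)`.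
Subadditivity bounds the first two terms by `2 H(X + Y)` and `2 H(X)`, conditional independence
gives `H(X₁, X₂, Y) = 2 H(X, Y) - H(Y)`, and the two hypotheses leave `H(X) + 4 log K`;
conditioning on `Y` only lowers entropy. -/

section Entropy

open Function

variable {Ω Ω' S T R : Type*} [Fintype Ω] [Fintype Ω'] (μ : FinProb Ω)

theorem prob_nonneg (X : Ω → S) (s : S) : 0 ≤ prob μ X s :=
  Finset.sum_nonneg fun ω _ => by split_ifs <;> simp [μ.nonneg ω]

theorem p_le_prob (X : Ω → S) (ω : Ω) : μ.p ω ≤ prob μ X (X ω) := by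
  have h := Finset.single_le_sum (f := fun ω' => if X ω' = X ω then μ.p ω' else 0)
    (fun ω' _ => by split_ifs <;> simp [μ.nonneg ω']) (Finset.mem_univ ω)
  simpa [prob] using h

theorem prob_congr {X : Ω → S} {Y : Ω → T} {s : S} {t : T}
    (h : ∀ ω, X ω = s ↔ Y ω = t) : prob μ X s = prob μ Y t :=
  Finset.sum_congr rfl fun ω _ => by simp only [h ω]

theorem sum_p_mul_comp {X : Ω → S} {A : Finset S} (hA : ∀ ω, X ω ∈ A) (g : S → ℝ) :
    ∑ ω, μ.p ω * g (X ω) = ∑ s ∈ A, prob μ X s * g s := by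
  rw [← Finset.sum_fiberwise_of_maps_to (fun ω _ => hA ω)]
  refine Finset.sum_congr rfl fun s _ => ?_
  rw [prob, ← Finset.sum_filter, Finset.sum_mul]
  exact Finset.sum_congr rfl fun ω hω => by rw [(Finset.mem_filter.mp hω).2]

theorem sum_prob_eq_one {X : Ω → S} {A : Finset S} (hA : ∀ ω, X ω ∈ A) :
    ∑ s ∈ A, prob μ X s = 1 := by
  simpa [μ.sum_one] using (sum_p_mul_comp μ hA fun _ => 1).symm

theorem entropy_eq_sum_p_mul_neg_log (X : Ω → S) :
    entropy μ X = ∑ ω, μ.p ω * -log (prob μ X (X ω)) := by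
  rw [sum_p_mul_comp μ (A := Finset.univ.image X) (by simp) fun s => -log (prob μ X s)]
  simp only [entropy, negMulLog, neg_mul, neg_mul_eq_mul_neg]

theorem entropy_eq_sum_negMulLog {X : Ω → S} {A : Finset S} (hA : ∀ ω, X ω ∈ A) :
    entropy μ X = ∑ s ∈ A, negMulLog (prob μ X s) := by
  rw [entropy_eq_sum_p_mul_neg_log, sum_p_mul_comp μ hA fun s => -log (prob μ X s)]
  simp only [negMulLog, neg_mul, neg_mul_eq_mul_neg]

theorem prob_comp {X : Ω → S} {A : Finset S} (hA : ∀ ω, X ω ∈ A) (f : S → T) (t : T) :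
    prob μ (fun ω => f (X ω)) t = ∑ s ∈ A, if f s = t then prob μ X s else 0 := by
  simpa [prob, mul_ite] using sum_p_mul_comp μ hA fun s => if f s = t then 1 else 0

theorem sum_prob_pair {X : Ω → S} {Z : Ω → T} {A : Finset S}
    (hA : ∀ ω, X ω ∈ A) (t : T) :
    ∑ s ∈ A, prob μ (fun ω => (X ω, Z ω)) (s, t) = prob μ Z t := by
  simp only [prob, Prod.mk.injEq, ite_and]
  rw [Finset.sum_comm]
  exact Finset.sum_congr rfl fun ω _ => by simp [Finset.sum_ite_eq, hA ω]

theorem entropy_const (c : S) : entropy μ (fun _ => c) = 0 := by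
  simp [entropy_eq_sum_p_mul_neg_log, prob, μ.sum_one]

theorem prob_pos_of_p_ne_zero (X : Ω → S) {ω : Ω} (hω : μ.p ω ≠ 0) :
    0 < prob μ X (X ω) :=
  (lt_of_le_of_ne (μ.nonneg ω) hω.symm).trans_le (p_le_prob μ X ω)

theorem entropy_eq_of_injective {X : Ω → S} {Y : Ω → T} (f : S → T) (hf : Injective f)
    (hY : ∀ ω, Y ω = f (X ω)) : entropy μ Y = entropy μ X := by
  simp only [entropy_eq_sum_p_mul_neg_log]
  exact Finset.sum_congr rfl fun ω _ => by
    rw [prob_congr μ (s := Y ω) (t := X ω) fun ω' => by rw [hY, hY, hf.eq_iff]]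

variable {μ} in
theorem IdentDist.comp_s12 {ν : FinProb Ω'} {X : Ω → S} {Y : Ω' → S} (h : IdentDist μ X ν Y)
    (f : S → T) : IdentDist μ (fun ω => f (X ω)) ν (fun ω => f (Y ω)) := by
  intro t
  rw [prob_comp μ (A := Finset.univ.image X ∪ Finset.univ.image Y) (by simp),
    prob_comp ν (A := Finset.univ.image X ∪ Finset.univ.image Y) (by simp)]
  exact Finset.sum_congr rfl fun s _ => by rw [h s]

variable {μ} in
theorem IdentDist.entropy_eq_s12 {ν : FinProb Ω'} {X : Ω → S} {Y : Ω' → S}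
    (h : IdentDist μ X ν Y) : entropy μ X = entropy ν Y := by
  rw [entropy_eq_sum_negMulLog μ (A := Finset.univ.image X ∪ Finset.univ.image Y) (by simp),
    entropy_eq_sum_negMulLog ν (A := Finset.univ.image X ∪ Finset.univ.image Y) (by simp)]
  exact Finset.sum_congr rfl fun s _ => by rw [h s]

section Triple

variable (U : Ω → S) (V : Ω → T) (W : Ω → R)

-- `log r ≤ r - 1` turns this into submodularity: the ratio is `q / p(u,v,w)` where
-- `q(u,v,w) = p(u,w) p(v,w) / p(w)` has total mass at most `1`.
theorem sum_p_mul_ratio_le_one :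
    ∑ ω, μ.p ω * (prob μ (fun ω => (U ω, W ω)) (U ω, W ω)
      * prob μ (fun ω => (V ω, W ω)) (V ω, W ω)
      / (prob μ (fun ω => (U ω, V ω, W ω)) (U ω, V ω, W ω) * prob μ W (W ω))) ≤ 1 := by
  set pUVW := prob μ (fun ω => (U ω, V ω, W ω))
  set pUW := prob μ (fun ω => (U ω, W ω))
  set pVW := prob μ (fun ω => (V ω, W ω))
  set pW := prob μ W
  have hU : ∀ ω, U ω ∈ Finset.univ.image U := by simp
  have hVW : ∀ ω, (V ω, W ω) ∈ Finset.univ.image V ×ˢ Finset.univ.image W := by simp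
  refine (sum_p_mul_comp μ (X := fun ω => (U ω, V ω, W ω))
    (fun ω => Finset.mem_product.mpr ⟨hU ω, hVW ω⟩)
    fun x => pUW (x.1, x.2.2) * pVW x.2 / (pUVW x * pW x.2.2)).trans_le ?_
  calc _ ≤ ∑ x ∈ Finset.univ.image U ×ˢ (Finset.univ.image V ×ˢ Finset.univ.image W),
          pUW (x.1, x.2.2) * (pVW x.2 / pW x.2.2) := by
        refine Finset.sum_le_sum fun x _ => show pUVW x * _ ≤ _ from ?_
        rcases eq_or_ne (pUVW x) 0 with h | h
        · rw [h, zero_mul]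
          exact mul_nonneg (prob_nonneg μ _ _)
            (div_nonneg (prob_nonneg μ _ _) (prob_nonneg μ _ _))
        · rw [← mul_div_assoc, mul_div_mul_left _ _ h, mul_div_assoc]
    _ = ∑ y ∈ Finset.univ.image V ×ˢ Finset.univ.image W, pW y.2 * (pVW y / pW y.2) := by
        rw [Finset.sum_product, Finset.sum_comm]
        exact Finset.sum_congr rfl fun y _ => by
          dsimp only
          rw [← Finset.sum_mul, sum_prob_pair μ hU]
    _ ≤ ∑ y ∈ Finset.univ.image V ×ˢ Finset.univ.image W, pVW y := by
        refine Finset.sum_le_sum fun y _ => ?_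
        rcases eq_or_ne (pW y.2) 0 with h | h
        · rw [h, zero_mul]
          exact prob_nonneg μ _ _
        · rw [mul_div_cancel₀ _ h]
    _ = 1 := sum_prob_eq_one μ hVW

theorem entropy_submodular :
    entropy μ (fun ω => (U ω, V ω, W ω)) + entropy μ W
      ≤ entropy μ (fun ω => (U ω, W ω)) + entropy μ (fun ω => (V ω, W ω)) := by
  have hratio := sum_p_mul_ratio_le_one μ U V W
  simp only [entropy_eq_sum_p_mul_neg_log]
  set pUVW := prob μ (fun ω => (U ω, V ω, W ω))
  set pUW := prob μ (fun ω => (U ω, W ω))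
  set pVW := prob μ (fun ω => (V ω, W ω))
  set pW := prob μ W
  have hterm : ∀ ω, μ.p ω * -log (pUVW (U ω, V ω, W ω)) + μ.p ω * -log (pW (W ω))
      ≤ μ.p ω * -log (pUW (U ω, W ω)) + μ.p ω * -log (pVW (V ω, W ω))
        + (μ.p ω * (pUW (U ω, W ω) * pVW (V ω, W ω) / (pUVW (U ω, V ω, W ω) * pW (W ω)))
          - μ.p ω) := by
    intro ω
    rcases eq_or_ne (μ.p ω) 0 with h | h
    · simp [h]
    have hUVW : 0 < pUVW (U ω, V ω, W ω) := prob_pos_of_p_ne_zero μ _ h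
    have hW : 0 < pW (W ω) := prob_pos_of_p_ne_zero μ W h
    have hUW : 0 < pUW (U ω, W ω) := prob_pos_of_p_ne_zero μ _ h
    have hVW : 0 < pVW (V ω, W ω) := prob_pos_of_p_ne_zero μ _ h
    have hlog := log_le_sub_one_of_pos (div_pos (mul_pos hUW hVW) (mul_pos hUVW hW))
    rw [log_div (mul_pos hUW hVW).ne' (mul_pos hUVW hW).ne', log_mul hUW.ne' hVW.ne',
      log_mul hUVW.ne' hW.ne'] at hlog
    linear_combination mul_le_mul_of_nonneg_left hlog (μ.nonneg ω)
  have hsum := Finset.sum_le_sum fun ω (_ : ω ∈ Finset.univ) => hterm ω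
  simp only [Finset.sum_add_distrib, Finset.sum_sub_distrib, μ.sum_one] at hsum
  linarith

variable {μ} in
theorem CondIndepGiven.entropy_eq_s12 (h : CondIndepGiven μ U V W) :
    entropy μ (fun ω => (U ω, V ω, W ω)) + entropy μ W
      = entropy μ (fun ω => (U ω, W ω)) + entropy μ (fun ω => (V ω, W ω)) := by
  simp only [entropy_eq_sum_p_mul_neg_log, ← Finset.sum_add_distrib]
  refine Finset.sum_congr rfl fun ω _ => ?_
  rcases eq_or_ne (μ.p ω) 0 with hω | hω
  · simp [hω]
  have hUVW := prob_pos_of_p_ne_zero μ (fun ω => (U ω, V ω, W ω)) hω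
  have hW := prob_pos_of_p_ne_zero μ W hω
  have hUW := prob_pos_of_p_ne_zero μ (fun ω => (U ω, W ω)) hω
  have hVW := prob_pos_of_p_ne_zero μ (fun ω => (V ω, W ω)) hω
  have hlog := congrArg log (h (U ω) (V ω) (W ω))
  rw [log_mul hUVW.ne' hW.ne', log_mul hUW.ne' hVW.ne'] at hlog
  linear_combination (-μ.p ω) * hlog

end Triple

theorem entropy_pair_unit (X : Ω → S) : entropy μ (fun ω => (X ω, ())) = entropy μ X :=
  entropy_eq_of_injective μ (fun x => (x, ())) (LeftInverse.injective (g := Prod.fst) fun _ => rfl)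
    fun _ => rfl

theorem entropy_pair_le (X : Ω → S) (Y : Ω → T) :
    entropy μ (fun ω => (X ω, Y ω)) ≤ entropy μ X + entropy μ Y := by
  have h := entropy_submodular μ X Y fun _ => ()
  have hXY : entropy μ (fun ω => (X ω, Y ω, ())) = entropy μ (fun ω => (X ω, Y ω)) :=
    entropy_eq_of_injective μ (fun x => (x.1, x.2, ()))
      (LeftInverse.injective (g := fun z => (z.1, z.2.1)) fun _ => rfl) fun _ => rfl
  rw [hXY, entropy_const, entropy_pair_unit, entropy_pair_unit] at h
  linarith

theorem condEntropy_le_entropy (X : Ω → S) (Y : Ω → T) :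
    condEntropy μ X Y ≤ entropy μ X := by
  have := entropy_pair_le μ X Y
  unfold condEntropy
  linarith

theorem entropy_sub_le {G : Type*} [AddCommGroup G] (A B C : Ω → G) :
    entropy μ (fun ω => A ω - B ω) ≤ entropy μ (fun ω => (A ω + C ω, B ω + C ω))
      + entropy μ (fun ω => (A ω, B ω)) - entropy μ (fun ω => (A ω, B ω, C ω)) := by
  have h := entropy_submodular μ (fun ω => B ω + C ω) B fun ω => A ω - B ω
  have hABC : entropy μ (fun ω => (B ω + C ω, B ω, A ω - B ω))
      = entropy μ (fun ω => (A ω, B ω, C ω)) :=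
    entropy_eq_of_injective μ (fun x => (x.2.1 + x.2.2, x.2.1, x.1 - x.2.1))
      (LeftInverse.injective (g := fun y => (y.2.2 + y.2.1, y.2.1, y.1 - y.2.1))
        fun x => by simp) fun _ => rfl
  have hAC_BC : entropy μ (fun ω => (B ω + C ω, A ω - B ω))
      = entropy μ (fun ω => (A ω + C ω, B ω + C ω)) :=
    entropy_eq_of_injective μ (fun x => (x.2, x.1 - x.2))
      (LeftInverse.injective (g := fun y => (y.2 + y.1, y.1)) fun x => by simp)
      fun ω => by simp only [add_sub_add_right_eq_sub]
  have hAB : entropy μ (fun ω => (B ω, A ω - B ω)) = entropy μ (fun ω => (A ω, B ω)) :=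
    entropy_eq_of_injective μ (fun x => (x.2, x.1 - x.2))
      (LeftInverse.injective (g := fun y => (y.2 + y.1, y.1)) fun x => by simp)
      fun _ => rfl
  linarith

end Entropy

theorem weak_entropy_bsg_general {G Ω Ω' : Type*} [AddCommGroup G] [Fintype Ω] [Fintype Ω']
    (μ : FinProb Ω) (X Y : Ω → G) (K : ℝ)
    (hent : entropy μ (fun ω => (X ω, Y ω)) ≥ entropy μ X + entropy μ Y - Real.log K)
    (hsum : entropy μ (fun ω => X ω + Y ω) ≤
      entropy μ X / 2 + entropy μ Y / 2 + Real.log K)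
    (μ' : FinProb Ω') (X₁ X₂ : Ω' → G) (Y' : Ω' → G)
    (hcopy₁ : IdentDist μ' (fun ω => (X₁ ω, Y' ω)) μ (fun ω => (X ω, Y ω)))
    (hcopy₂ : IdentDist μ' (fun ω => (X₂ ω, Y' ω)) μ (fun ω => (X ω, Y ω)))
    (hci : CondIndepGiven μ' X₁ X₂ Y') :
    condEntropy μ' (fun ω => X₁ ω - X₂ ω) Y' ≤ entropy μ X + 4 * Real.log K := by
  have hY' : entropy μ' Y' = entropy μ Y := (hcopy₁.comp_s12 Prod.snd).entropy_eq_s12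
  have hX₁ : entropy μ' X₁ = entropy μ X := (hcopy₁.comp_s12 Prod.fst).entropy_eq_s12
  have hX₂ : entropy μ' X₂ = entropy μ X := (hcopy₂.comp_s12 Prod.fst).entropy_eq_s12
  have hXY₁ := hcopy₁.entropy_eq_s12
  have hXY₂ := hcopy₂.entropy_eq_s12
  have hsum₁ : entropy μ' (fun ω => X₁ ω + Y' ω) = entropy μ (fun ω => X ω + Y ω) :=
    (hcopy₁.comp_s12 fun z => z.1 + z.2).entropy_eq_s12
  have hsum₂ : entropy μ' (fun ω => X₂ ω + Y' ω) = entropy μ (fun ω => X ω + Y ω) :=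
    (hcopy₂.comp_s12 fun z => z.1 + z.2).entropy_eq_s12
  linarith [condEntropy_le_entropy μ' (fun ω => X₁ ω - X₂ ω) Y',
    entropy_sub_le μ' X₁ X₂ Y', hci.entropy_eq_s12,
    entropy_pair_le μ' (fun ω => X₁ ω + Y' ω) fun ω => X₂ ω + Y' ω,
    entropy_pair_le μ' X₁ X₂]

/-- weak entropy Balog–Szemerédi–Gowers: if
`H(X,Y) ≥ H(X) + H(Y) − log K` and `H(X+Y) ≤ H(X)/2 + H(Y)/2 + log K` with `K ≥ 1`,
and `X₁, X₂` are conditionally independent copies of `X` given `Y` (realised by a copy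
`Y'` of `Y`), then `H(X₁ − X₂ | Y') ≤ H(X) + 4·log K`. -/
theorem weak_entropy_bsg {G Ω Ω' : Type*} [AddCommGroup G] [Fintype Ω] [Fintype Ω']
    (μ : FinProb Ω) (X Y : Ω → G) (K : ℝ) (hK : 1 ≤ K)
    (hent : entropy μ (fun ω => (X ω, Y ω)) ≥ entropy μ X + entropy μ Y - Real.log K)
    (hsum : entropy μ (fun ω => X ω + Y ω) ≤
      entropy μ X / 2 + entropy μ Y / 2 + Real.log K)
    (μ' : FinProb Ω') (X₁ X₂ : Ω' → G) (Y' : Ω' → G)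
    (hcopy₁ : IdentDist μ' (fun ω => (X₁ ω, Y' ω)) μ (fun ω => (X ω, Y ω)))
    (hcopy₂ : IdentDist μ' (fun ω => (X₂ ω, Y' ω)) μ (fun ω => (X ω, Y ω)))
    (hci : CondIndepGiven μ' X₁ X₂ Y') :
    condEntropy μ' (fun ω => X₁ ω - X₂ ω) Y' ≤ entropy μ X + 4 * Real.log K :=
  weak_entropy_bsg_general μ X Y K hent hsum μ' X₁ X₂ Y' hcopy₁ hcopy₂ hci
end

section
/- Concavity consequence for F(x) = x log(1/x): for all 0 ≤ a, x ≤ 1/e one has F(ax) ≤ 2·F(a)·F(x). -/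
open Real
open scoped BigOperators Pointwise Classical

theorem Real.self_le_negMulLog {x : ℝ} (hx0 : 0 ≤ x) (hx : x ≤ (exp 1)⁻¹) : x ≤ negMulLog x := by
  rcases hx0.eq_or_lt with rfl | hx_pos
  · simp
  have hlog : log x ≤ -1 := by
    simpa only [log_inv, log_exp] using log_le_log hx_pos hx
  rw [negMulLog, neg_mul_comm]
  exact le_mul_of_one_le_right hx0 (by linarith)

/-- for `F(x) = x·log(1/x)` and `0 ≤ a, x ≤ 1/e`, `F(ax) ≤ 2·F(a)·F(x)`. -/
theorem negMulLog_mul_le {a x : ℝ} (ha0 : 0 ≤ a) (ha : a ≤ (Real.exp 1)⁻¹)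
    (hx0 : 0 ≤ x) (hx : x ≤ (Real.exp 1)⁻¹) :
    Real.negMulLog (a * x) ≤ 2 * Real.negMulLog a * Real.negMulLog x := by
  have hinv_le_one : (exp 1)⁻¹ ≤ 1 := inv_le_one_of_one_le₀ (one_le_exp zero_le_one)
  have hFa : a ≤ negMulLog a := self_le_negMulLog ha0 ha
  have hFx : x ≤ negMulLog x := self_le_negMulLog hx0 hx
  have hFa0 : 0 ≤ negMulLog a := negMulLog_nonneg ha0 (ha.trans hinv_le_one)
  have hFx0 : 0 ≤ negMulLog x := negMulLog_nonneg hx0 (hx.trans hinv_le_one)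
  calc negMulLog (a * x) = x * negMulLog a + a * negMulLog x := negMulLog_mul a x
    _ ≤ negMulLog x * negMulLog a + negMulLog a * negMulLog x := by gcongr
    _ = 2 * negMulLog a * negMulLog x := by ring
end
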